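/- arXiv:1001.3219 — 2 statements merged into one kernel-verified Lean document; each statement's English description precedes it below -/
import Mathlib

section
/- Let X be a finiteness space and k a field with the discrete topology. Then the topological vector space k⟨X⟩ is Hausdorff, and every Cauchy net in k⟨X⟩ converges (k⟨X⟩ is complete). -/
/-!
The open subspaces `V(e')`, `e' ∈ 𝔉(X)^⊥`, include those with `e'` a singleton, so coordinates
are continuous into discrete `k`: this separates points, and it makes every coordinate of a
Cauchy net eventually constant. The coordinatewise limit `L` lies in `k⟨X⟩` because for each
`e' ∈ 𝔉(X)^⊥` the net is eventually constant on all of `e'`, so `supp L ∩ e'` is contained in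
`supp (a γ) ∩ e'` for a single `γ`, which is finite; thus `supp L ∈ 𝔉(X)^⊥⊥ ⊆ 𝔉(X)`.
-/

namespace Resource

def orth {I : Type*} (F : Set (Set I)) : Set (Set I) := {e' | ∀ e ∈ F, (e ∩ e').Finite}

structure FinSpace (I : Type*) where
  F : Set (Set I)
  biorth : orth (orth F) ⊆ F

lemma subset_biorth {I : Type*} (G : Set (Set I)) : G ⊆ orth (orth G) := by
  intro e he g hg
  have := hg e he
  rwa [Set.inter_comm] at this

lemma orth_anti {I : Type*} {G H : Set (Set I)} (h : G ⊆ H) : orth H ⊆ orth G :=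
  fun g hg e he => hg e (h he)

def FinSpace.ofOrth {I : Type*} (G : Set (Set I)) : FinSpace I :=
  ⟨orth G, orth_anti (subset_biorth G)⟩

lemma FinSpace.empty_mem {I : Type*} (X : FinSpace I) : ∅ ∈ X.F :=
  X.biorth (fun g _ => by simp)

lemma FinSpace.mem_of_subset {I : Type*} (X : FinSpace I) {e f : Set I}
    (he : e ∈ X.F) (h : f ⊆ e) : f ∈ X.F := by
  refine X.biorth (fun g hg => ?_)
  exact ((hg e he).subset (fun x hx => ⟨h hx.2, hx.1⟩))

lemma FinSpace.union_mem {I : Type*} (X : FinSpace I) {e f : Set I}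
    (he : e ∈ X.F) (hf : f ∈ X.F) : e ∪ f ∈ X.F := by
  refine X.biorth (fun g hg => ?_)
  have h1 := hg e he
  have h2 := hg f hf
  rw [Set.inter_comm] at h1 h2
  rw [Set.inter_union_distrib_left]
  exact h1.union h2

def fsSub (k : Type*) [Field k] {I : Type*} (X : FinSpace I) : Submodule k (I → k) where
  carrier := {a | {s | a s ≠ 0} ∈ X.F}
  add_mem' := by
    intro a b ha hb
    refine X.mem_of_subset (X.union_mem ha hb) ?_
    intro s hs
    by_contra h
    simp only [Set.mem_union, Set.mem_setOf_eq, not_or, not_not] at h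
    exact hs (by simp [Pi.add_apply, h.1, h.2])
  zero_mem' := by
    refine X.mem_of_subset X.empty_mem ?_
    intro s hs
    simp at hs
  smul_mem' := by
    intro c a ha
    refine X.mem_of_subset ha ?_
    intro s hs
    by_contra h
    simp only [Set.mem_setOf_eq, not_not] at h
    exact hs (by simp [Pi.smul_apply, h])

def fsTop (k : Type*) [Field k] {I : Type*} (X : FinSpace I) :
    TopologicalSpace (fsSub k X) where
  IsOpen U := ∀ a ∈ U, ∃ e' ∈ orth X.F, ∀ b : fsSub k X, (∀ s ∈ e', b.1 s = a.1 s) → b ∈ U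
  isOpen_univ := by
    intro a _
    exact ⟨∅, fun e _ => by simp, fun b _ => trivial⟩
  isOpen_inter := by
    rintro U V hU hV a ⟨haU, haV⟩
    obtain ⟨e₁, he₁, h₁⟩ := hU a haU
    obtain ⟨e₂, he₂, h₂⟩ := hV a haV
    refine ⟨e₁ ∪ e₂, fun e he => ?_, fun b hb => ?_⟩
    · rw [Set.inter_union_distrib_left]
      exact (he₁ e he).union (he₂ e he)
    · exact ⟨h₁ b (fun s hs => hb s (Or.inl hs)), h₂ b (fun s hs => hb s (Or.inr hs))⟩
  isOpen_sUnion := by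
    rintro 𝒮 h a ⟨U, hU, haU⟩
    obtain ⟨e', he', hb⟩ := h U hU a haU
    exact ⟨e', he', fun b hbs => ⟨U, hU, hb b hbs⟩⟩


universe u

section Completeness

variable {I : Type*} {k : Type*} [Field k] {X : FinSpace I}

attribute [local instance] fsTop

lemma singleton_mem_orth (X : FinSpace I) (s : I) : {s} ∈ orth X.F :=
  fun _ _ => (Set.finite_singleton s).subset Set.inter_subset_right

variable (k X) in
def vanishingOn (e' : Set I) : Submodule k (fsSub k X) where
  carrier := {b | ∀ s ∈ e', b.1 s = 0}
  zero_mem' := fun _ _ => rfl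
  add_mem' hb hc s hs := by
    simp only [Submodule.coe_add, Pi.add_apply, hb s hs, hc s hs, add_zero]
  smul_mem' r _ hb s hs := by
    simp only [Submodule.coe_smul, Pi.smul_apply, hb s hs, smul_zero]

lemma sub_mem_vanishingOn {e' : Set I} {b c : fsSub k X} :
    b - c ∈ vanishingOn k X e' ↔ ∀ s ∈ e', b.1 s = c.1 s :=
  forall₂_congr fun _ _ => sub_eq_zero

lemma isOpen_vanishingOn {e' : Set I} (he' : e' ∈ orth X.F) :
    IsOpen (vanishingOn k X e' : Set (fsSub k X)) :=
  fun _ hc => ⟨e', he', fun _ hb s hs => (hb s hs).trans (hc s hs)⟩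

lemma exists_vanishingOn_le {V : Submodule k (fsSub k X)} (hV : IsOpen (V : Set (fsSub k X))) :
    ∃ e' ∈ orth X.F, vanishingOn k X e' ≤ V := by
  obtain ⟨e', he', h⟩ := hV 0 V.zero_mem
  exact ⟨e', he', h⟩

lemma isOpen_setOf_apply_eq (s : I) (t : k) : IsOpen {c : fsSub k X | c.1 s = t} :=
  fun _ hc => ⟨{s}, singleton_mem_orth X s, fun _ hd => (hd s rfl).trans hc⟩

instance : T2Space (fsSub k X) where
  t2 x y hxy := by
    obtain ⟨s, hs⟩ : ∃ s, x.1 s ≠ y.1 s := Function.ne_iff.mp (Subtype.coe_ne_coe.mpr hxy)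
    exact ⟨_, _, isOpen_setOf_apply_eq s (x.1 s), isOpen_setOf_apply_eq s (y.1 s), rfl, rfl,
      Set.disjoint_left.mpr fun c h₁ h₂ => hs (h₁ ▸ h₂)⟩

variable {Γ : Type*} [Preorder Γ] {a : Γ → fsSub k X}

def IsCauchyNet (a : Γ → fsSub k X) : Prop :=
  ∀ V : Submodule k (fsSub k X), IsOpen (V : Set (fsSub k X)) → ∃ γ, ∀ δ, γ ≤ δ → a δ - a γ ∈ V

def ConvergesTo (a : Γ → fsSub k X) (L : fsSub k X) : Prop :=
  ∀ V : Submodule k (fsSub k X), IsOpen (V : Set (fsSub k X)) → ∃ γ, ∀ δ, γ ≤ δ → a δ - L ∈ V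

lemma IsCauchyNet.exists_stable (ha : IsCauchyNet a) {e' : Set I} (he' : e' ∈ orth X.F) :
    ∃ γ, ∀ δ, γ ≤ δ → ∀ s ∈ e', (a δ).1 s = (a γ).1 s := by
  obtain ⟨γ, hγ⟩ := ha _ (isOpen_vanishingOn he')
  exact ⟨γ, fun δ hδ => sub_mem_vanishingOn.mp (hγ δ hδ)⟩

/-- The value at which the `s`-th coordinate of the Cauchy net `a` is eventually constant. -/
noncomputable def IsCauchyNet.lim (ha : IsCauchyNet a) (s : I) : k :=
  (a (ha.exists_stable (singleton_mem_orth X s)).choose).1 s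

variable [IsDirected Γ (· ≤ ·)]

lemma IsCauchyNet.exists_stable_lim (ha : IsCauchyNet a) {e' : Set I} (he' : e' ∈ orth X.F) :
    ∃ γ, ∀ δ, γ ≤ δ → ∀ s ∈ e', (a δ).1 s = ha.lim s := by
  obtain ⟨γ, hγ⟩ := ha.exists_stable he'
  refine ⟨γ, fun δ hδ s hs => ?_⟩
  have hs' := (ha.exists_stable (singleton_mem_orth X s)).choose_spec
  obtain ⟨ε, hδε, hsε⟩ := directed_of (· ≤ ·) δ (ha.exists_stable (singleton_mem_orth X s)).choose
  calc (a δ).1 s = (a γ).1 s := hγ δ hδ s hs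
    _ = (a ε).1 s := (hγ ε (hδ.trans hδε) s hs).symm
    _ = ha.lim s := hs' ε hsε s rfl

lemma IsCauchyNet.lim_mem (ha : IsCauchyNet a) : ha.lim ∈ fsSub k X := by
  refine X.biorth fun e' he' => ?_
  obtain ⟨γ, hγ⟩ := ha.exists_stable_lim he'
  exact (he' _ (a γ).2).subset fun s ⟨hse, hs⟩ => ⟨(hγ γ le_rfl s hse).trans_ne hs, hse⟩

lemma IsCauchyNet.convergesTo_lim (ha : IsCauchyNet a) : ConvergesTo a ⟨ha.lim, ha.lim_mem⟩ := by
  intro V hV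
  obtain ⟨e', he', hle⟩ := exists_vanishingOn_le hV
  obtain ⟨γ, hγ⟩ := ha.exists_stable_lim he'
  exact ⟨γ, fun δ hδ => hle (sub_mem_vanishingOn.mpr (hγ δ hδ))⟩

end Completeness

theorem statement7 {I : Type*} (k : Type*) [Field k] (X : FinSpace I) :
    letI : TopologicalSpace (fsSub k X) := fsTop k X
    T2Space (fsSub k X) ∧
    ∀ (Γ : Type u) [Preorder Γ] [Nonempty Γ], IsDirected Γ (· ≤ ·) →
      ∀ a : Γ → fsSub k X,
        (∀ V : Submodule k (fsSub k X), IsOpen (V : Set (fsSub k X)) →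
          ∃ γ, ∀ δ, γ ≤ δ → a δ - a γ ∈ V) →
        ∃ L : fsSub k X, ∀ V : Submodule k (fsSub k X), IsOpen (V : Set (fsSub k X)) →
          ∃ γ, ∀ δ, γ ≤ δ → a δ - L ∈ V :=
  ⟨inferInstance, fun _ _ _ _ _ ha => ⟨_, IsCauchyNet.convergesTo_lim ha⟩⟩

end Resource
end

section
/- Let X be a finiteness space and k a field with the discrete topology. The topological vector space k⟨X⟩ is metrizable if and only if there exists an increasing sequence (e'(n))_{n∈ℕ} of elements of F(X)^⊥ such that every e' ∈ F(X)^⊥ is contained in e'(n) for some n ∈ ℕ. -/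
namespace Resource

/-!
The sets `{b | b = a on e'}`, `e' ∈ F(X)^⊥`, form a neighbourhood basis at `a` which is invariant
under translation, so `k⟨X⟩` is a Hausdorff topological group, and by Birkhoff–Kakutani it is
metrizable iff `0` has a countable neighbourhood basis. Testing with the indicator of a point
shows that `V(e') ⊆ V(f')` forces `f' ⊆ e'`, so a countable antitone basis `V(e'(n))` at `0` is
the same as an increasing cofinal sequence `e'(n)` in `F(X)^⊥`.
-/

open Filter Topology

lemma mem_orth_of_finite {I : Type*} (G : Set (Set I)) {f : Set I} (hf : f.Finite) :
    f ∈ orth G :=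
  fun _ _ => hf.subset Set.inter_subset_right

lemma FinSpace.mem_of_finite {I : Type*} (X : FinSpace I) {e : Set I} (he : e.Finite) :
    e ∈ X.F :=
  X.biorth (mem_orth_of_finite _ he)

section

variable {I k : Type*} [Field k] {X : FinSpace I}

lemma single_mem_fsSub [DecidableEq I] (s : I) (c : k) : Pi.single s c ∈ fsSub k X :=
  X.mem_of_subset (X.mem_of_finite (Set.finite_singleton s)) fun _ ht => by
    by_contra h
    exact ht (Pi.single_eq_of_ne h _)

/-- `cylinder f 0` is the paper's `V(f)`. -/
def cylinder (f : Set I) (a : fsSub k X) : Set (fsSub k X) :=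
  {b | ∀ s ∈ f, b.1 s = a.1 s}

lemma cylinder_anti {f g : Set I} (h : f ⊆ g) (a : fsSub k X) :
    cylinder g a ⊆ cylinder f a :=
  fun _ hb s hs => hb s (h hs)

lemma subset_of_cylinder_subset {f g : Set I} (a : fsSub k X)
    (h : cylinder f a ⊆ cylinder g a) : g ⊆ f := by
  classical
  intro s hs
  by_contra hsf
  let b : fsSub k X := a + ⟨Pi.single s 1, single_mem_fsSub s 1⟩
  have hb : b ∈ cylinder f a := fun t ht => by
    simp [b, Pi.single_eq_of_ne (ne_of_mem_of_not_mem ht hsf)]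
  simpa [b] using h hb s hs

lemma image_add_cylinder_zero (f : Set I) (a : fsSub k X) :
    (a + ·) '' cylinder f 0 = cylinder f a := by
  ext b
  constructor
  · rintro ⟨c, hc, rfl⟩ s hs
    simp [hc s hs]
  · intro hb
    exact ⟨b - a, fun s hs => by simp [hb s hs], add_sub_cancel a b⟩

attribute [local instance] fsTop

lemma isOpen_cylinder {f : Set I} (hf : f ∈ orth X.F) (a : fsSub k X) :
    IsOpen (cylinder f a) :=
  fun _ hb => ⟨f, hf, fun _ hc s hs => (hc s hs).trans (hb s hs)⟩

lemma nhds_hasBasis_cylinder (a : fsSub k X) :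
    (𝓝 a).HasBasis (· ∈ orth X.F) (cylinder · a) := by
  refine ⟨fun U => ⟨fun hU => ?_, fun ⟨f, hf, hfU⟩ => ?_⟩⟩
  · obtain ⟨W, hWU, hW, haW⟩ := mem_nhds_iff.1 hU
    obtain ⟨f, hf, hfW⟩ := hW a haW
    exact ⟨f, hf, fun b hb => hWU (hfW b hb)⟩
  · exact Filter.mem_of_superset ((isOpen_cylinder hf a).mem_nhds fun _ _ => rfl) hfU

instance : IsTopologicalAddGroup (fsSub k X) := by
  refine IsTopologicalAddGroup.of_comm_of_nhds_zero ?_ ?_ fun a => ?_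
  · refine ((nhds_hasBasis_cylinder 0).prod_self.tendsto_iff (nhds_hasBasis_cylinder 0)).2
      fun f hf => ⟨f, hf, fun x hx s hs => ?_⟩
    change (x.1 + x.2).1 s = 0
    simp [hx.1 s hs, hx.2 s hs]
  · refine ((nhds_hasBasis_cylinder 0).tendsto_iff (nhds_hasBasis_cylinder 0)).2
      fun f hf => ⟨f, hf, fun x hx s hs => ?_⟩
    simp [hx s hs]
  · refine (nhds_hasBasis_cylinder a).eq_of_same_basis ?_
    simpa only [image_add_cylinder_zero] using
      (nhds_hasBasis_cylinder (0 : fsSub k X)).map (a + ·)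

instance inst_s19 : T2Space (fsSub k X) := by
  refine t2Space_iff_disjoint_nhds.2 fun a b hab => ?_
  obtain ⟨s, hs⟩ : ∃ s, a.1 s ≠ b.1 s := by
    by_contra! h
    exact hab (Subtype.ext (funext h))
  have hs_orth : {s} ∈ orth X.F := mem_orth_of_finite X.F (Set.finite_singleton s)
  refine ((nhds_hasBasis_cylinder a).disjoint_iff (nhds_hasBasis_cylinder b)).2
    ⟨{s}, hs_orth, {s}, hs_orth, Set.disjoint_left.2 fun c hca hcb => hs ?_⟩
  exact (hca s rfl).symm.trans (hcb s rfl)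

lemma exists_monotone_cofinal_of_isCountablyGenerated
    [(𝓝 (0 : fsSub k X)).IsCountablyGenerated] :
    ∃ e : ℕ → Set I, Monotone e ∧ (∀ n, e n ∈ orth X.F) ∧ ∀ f ∈ orth X.F, ∃ n, f ⊆ e n := by
  obtain ⟨e, he, hbasis⟩ := (nhds_hasBasis_cylinder (0 : fsSub k X)).exists_antitone_subbasis
  refine ⟨e, fun m n hmn => subset_of_cylinder_subset 0 (hbasis.antitone hmn), he,
    fun f hf => ?_⟩
  obtain ⟨n, -, hn⟩ := hbasis.1.mem_iff.1 ((nhds_hasBasis_cylinder 0).mem_of_mem hf)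
  exact ⟨n, subset_of_cylinder_subset 0 hn⟩

lemma isCountablyGenerated_nhds_zero {e : ℕ → Set I} (he : ∀ n, e n ∈ orth X.F)
    (he_cofinal : ∀ f ∈ orth X.F, ∃ n, f ⊆ e n) :
    (𝓝 (0 : fsSub k X)).IsCountablyGenerated :=
  ((nhds_hasBasis_cylinder 0).to_hasBasis
    (fun f hf => (he_cofinal f hf).imp fun _ hn => ⟨trivial, cylinder_anti hn 0⟩)
    fun n _ => ⟨e n, he n, subset_rfl⟩).isCountablyGenerated

lemma metrizableSpace_of_isCountablyGenerated [(𝓝 (0 : fsSub k X)).IsCountablyGenerated] :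
    TopologicalSpace.MetrizableSpace (fsSub k X) :=
  letI := IsTopologicalAddGroup.rightUniformSpace (fsSub k X)
  haveI := isUniformAddGroup_of_addCommGroup (G := fsSub k X)
  haveI := IsUniformAddGroup.uniformity_countably_generated (α := fsSub k X)
  UniformSpace.metrizableSpace

end

theorem statement19 {I : Type*} (k : Type*) [Field k] (X : FinSpace I) :
    letI : TopologicalSpace (fsSub k X) := fsTop k X
    (TopologicalSpace.MetrizableSpace (fsSub k X) ↔
      ∃ e' : ℕ → Set I, Monotone e' ∧ (∀ n, e' n ∈ orth X.F) ∧
        ∀ f ∈ orth X.F, ∃ n, f ⊆ e' n) := by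
  let := fsTop k X
  constructor
  · intro _
    exact exists_monotone_cofinal_of_isCountablyGenerated (k := k)
  · rintro ⟨e, -, he, he_cofinal⟩
    have := isCountablyGenerated_nhds_zero (k := k) he he_cofinal
    exact metrizableSpace_of_isCountablyGenerated (k := k) (X := X)

end Resource
end
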